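/- For every real m > 0 and x ≥ 0, φ_m(x) = ψ(m) − ∑_{k=1}^∞ (−x)^k / (k · m(m+1)⋯(m+k−1)), where the series converges absolutely. -/

import Mathlib

open Real MeasureTheory Filter ProbabilityTheory

/-- The digamma function psi(x) = Gamma'(x)/Gamma(x). -/
noncomputable def psi (x : ℝ) : ℝ := deriv Real.Gamma x / Real.Gamma x

/-- phi_m(x) = e^{-x} * sum_j (x^j/j!) psi(j+m). -/
noncomputable def phi (m x : ℝ) : ℝ :=
  Real.exp (-x) * ∑' j : ℕ, x ^ j / (Nat.factorial j : ℝ) * psi (j + m)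

/-!
Since `ψ(y + 1) = ψ(y) + 1/y`, we have `ψ(j + m) = ψ(m) + H_j` with `H_j = ∑_{i<j} 1/(m + i)`, so
`φ_m(x) = ψ(m) + e^{-x} ∑_j H_j x^j/j!`. In the Cauchy product of `∑_j H_j x^j/j!` with the
exponential series of `e^{-x}` the `n`-th term is `x^n/n! · Δⁿ H (0)`, where `Δ` is the forward
difference. As `Δ H (j) = 1/(m + j)` and `Δᵏ` maps `1/(m + j)` to
`(-1)^k k! / ((m + j)(m + j + 1)⋯(m + j + k))`, these are exactly the terms of the claimed series.
-/

open Finset fwdDiff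
open scoped Nat

lemma Real.hasSum_pow_div_factorial (x : ℝ) : HasSum (fun n : ℕ => x ^ n / n !) (exp x) := by
  rw [Real.exp_eq_exp_ℝ]
  exact NormedSpace.expSeries_div_hasSum_exp x

lemma psi_add_one {y : ℝ} (hy : ∀ n : ℕ, y ≠ -n) : psi (y + 1) = psi y + 1 / y := by
  have hy0 : y ≠ 0 := by simpa using hy 0
  have hGamma_shift : (fun z => Gamma (z + 1)) =ᶠ[nhds y] fun z => z * Gamma z := by
    filter_upwards [isOpen_ne.mem_nhds hy0] with z hz using Gamma_add_one hz
  have hderiv : deriv Gamma (y + 1) = Gamma y + y * deriv Gamma y := by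
    rw [← deriv_comp_add_const, hGamma_shift.deriv_eq,
      deriv_fun_mul differentiableAt_fun_id (differentiableAt_Gamma hy)]
    simp
  rw [psi, psi, hderiv, Gamma_add_one hy0]
  field_simp [Gamma_ne_zero hy]
  ring

noncomputable def shiftedHarmonic (m : ℝ) (j : ℕ) : ℝ := ∑ i ∈ range j, (m + i)⁻¹

lemma psi_nat_add {m : ℝ} (hm : ∀ n : ℕ, m ≠ -n) (j : ℕ) :
    psi (j + m) = psi m + shiftedHarmonic m j := by
  induction j with
  | zero => simp [shiftedHarmonic]
  | succ j ih =>
    have hjm : ∀ n : ℕ, (j + m : ℝ) ≠ -n := fun n h => hm (n + j) (by push_cast; linarith)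
    rw [shiftedHarmonic, sum_range_succ, ← shiftedHarmonic, Nat.cast_succ, add_right_comm,
      psi_add_one hjm, ih, add_comm m]
    ring

lemma fwdDiff_shiftedHarmonic (m : ℝ) : Δ_[1] (shiftedHarmonic m) = fun j : ℕ => (m + j)⁻¹ := by
  ext j
  simp [fwdDiff, shiftedHarmonic, sum_range_succ]

lemma fwdDiff_iter_inv_add {m : ℝ} (hm : ∀ n : ℕ, m ≠ -n) (k j : ℕ) :
    (Δ_[1])^[k] (fun j : ℕ => (m + j)⁻¹) j
      = (-1) ^ k * k ! / ∏ i ∈ range (k + 1), (m + j + i) := by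
  have hne : ∀ n : ℕ, m + n ≠ 0 := fun n h => hm n (by linarith)
  induction k generalizing j with
  | zero => simp
  | succ k ih =>
    rw [Function.iterate_succ_apply', fwdDiff, ih, ih]
    have hne' : ∀ a : ℕ, m + j + a ≠ 0 := fun a => by simpa [add_assoc] using hne (j + a)
    have hprod_ne : ∏ i ∈ range (k + 2), (m + j + i) ≠ 0 :=
      prod_ne_zero_iff.2 fun i _ => hne' i
    have hleft : ∏ i ∈ range (k + 1), (m + ↑(j + 1) + i)
        = (∏ i ∈ range (k + 2), (m + j + i)) / (m + j) := by
      rw [eq_div_iff (by simpa using hne' 0), prod_range_succ' _ (k + 1)]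
      congr 1
      · exact prod_congr rfl fun i _ => by push_cast; ring
      · simp
    have hright : ∏ i ∈ range (k + 1), (m + j + i)
        = (∏ i ∈ range (k + 2), (m + j + i)) / (m + j + (k + 1 : ℕ)) := by
      rw [prod_range_succ _ (k + 1), mul_div_cancel_right₀ _ (hne' (k + 1))]
    rw [hleft, hright, Nat.factorial_succ]
    field_simp
    push_cast
    ring

lemma fwdDiff_iter_shiftedHarmonic {m : ℝ} (hm : ∀ n : ℕ, m ≠ -n) (n : ℕ) :
    (Δ_[1])^[n + 1] (shiftedHarmonic m) 0 = (-1) ^ n * n ! / ∏ i ∈ range (n + 1), (m + i) := by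
  rw [Function.iterate_succ_apply, fwdDiff_shiftedHarmonic, fwdDiff_iter_inv_add hm]
  simp

lemma shiftedHarmonic_le {m : ℝ} (hm : 0 < m) (j : ℕ) : shiftedHarmonic m j ≤ j / m := by
  calc shiftedHarmonic m j ≤ ∑ _i ∈ range j, m⁻¹ :=
        sum_le_sum fun i _ => inv_anti₀ hm (by simp)
    _ = j / m := by simp [div_eq_mul_inv]

lemma summable_norm_pow_div_factorial_mul_shiftedHarmonic {m : ℝ} (hm : 0 < m) (x : ℝ) :
    Summable fun l : ℕ => ‖x ^ l / l ! * shiftedHarmonic m l‖ := by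
  refine .of_nonneg_of_le (fun _ => norm_nonneg _) (fun l => ?_)
    ((Real.summable_pow_div_factorial (2 * |x|)).div_const m)
  have hH : 0 ≤ shiftedHarmonic m l := sum_nonneg fun i _ => by positivity
  have hl : (l : ℝ) ≤ 2 ^ l := by exact_mod_cast (Nat.lt_two_pow_self).le
  calc ‖x ^ l / l ! * shiftedHarmonic m l‖ = |x| ^ l / l ! * shiftedHarmonic m l := by
        rw [norm_mul, norm_div, norm_pow, Real.norm_eq_abs, Real.norm_natCast,
          Real.norm_of_nonneg hH]
    _ ≤ |x| ^ l / l ! * (2 ^ l / m) := by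
        gcongr
        exact (shiftedHarmonic_le hm l).trans (by gcongr)
    _ = (2 * |x|) ^ l / l ! / m := by ring

lemma sum_range_pow_div_factorial_mul_neg_pow_div_factorial (a : ℕ → ℝ) (x : ℝ) (n : ℕ) :
    ∑ l ∈ range (n + 1), x ^ l / l ! * a l * ((-x) ^ (n - l) / (n - l)!)
      = x ^ n / n ! * (Δ_[1])^[n] a 0 := by
  rw [fwdDiff_iter_eq_sum_shift, mul_sum]
  refine sum_congr rfl fun l hl => ?_
  obtain ⟨k, rfl⟩ := Nat.exists_eq_add_of_le (Nat.lt_succ_iff.1 (mem_range.1 hl))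
  simp only [Nat.add_sub_cancel_left, zsmul_eq_mul, smul_eq_mul, mul_one, zero_add]
  push_cast
  rw [Nat.cast_choose ℝ (Nat.le_add_right l k), Nat.add_sub_cancel_left]
  field_simp
  ring

lemma hasSum_pow_div_factorial_mul_fwdDiff_iter {a : ℕ → ℝ} {x : ℝ}
    (ha : Summable fun l : ℕ => ‖x ^ l / l ! * a l‖) :
    HasSum (fun n : ℕ => x ^ n / n ! * (Δ_[1])^[n] a 0)
      (exp (-x) * ∑' l : ℕ, x ^ l / l ! * a l) := by
  have h := hasSum_sum_range_mul_of_summable_norm ha (NormedSpace.norm_expSeries_div_summable (-x))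
  rw [(Real.hasSum_pow_div_factorial (-x)).tsum_eq, mul_comm] at h
  simpa only [sum_range_pow_div_factorial_mul_neg_pow_div_factorial] using h

lemma hasSum_neg_pow_div_mul_prod {m : ℝ} (hm : 0 < m) (x : ℝ) :
    HasSum (fun k : ℕ => (-x) ^ (k + 1) / ((k + 1 : ℝ) * ∏ i ∈ range (k + 1), (m + i)))
      (-(exp (-x) * ∑' l : ℕ, x ^ l / l ! * shiftedHarmonic m l)) := by
  have hm' : ∀ n : ℕ, m ≠ -n := fun n h => by linarith [n.cast_nonneg (α := ℝ)]
  have hterm : ∀ k : ℕ, (-x) ^ (k + 1) / ((k + 1 : ℝ) * ∏ i ∈ range (k + 1), (m + i))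
      = -(x ^ (k + 1) / (k + 1)! * (Δ_[1])^[k + 1] (shiftedHarmonic m) 0) := fun k => by
    have hP : ∏ i ∈ range (k + 1), (m + i) ≠ 0 := prod_ne_zero_iff.2 fun i _ => by positivity
    rw [fwdDiff_iter_shiftedHarmonic hm', Nat.factorial_succ, neg_pow]
    push_cast
    field_simp
    ring
  have h := (hasSum_nat_add_iff' 1).2 (hasSum_pow_div_factorial_mul_fwdDiff_iter
    (summable_norm_pow_div_factorial_mul_shiftedHarmonic hm x))
  have h0 : x ^ 0 / (0 ! : ℝ) * (Δ_[1])^[0] (shiftedHarmonic m) 0 = 0 := by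
    simp [shiftedHarmonic]
  rw [sum_range_one, h0, sub_zero] at h
  simpa only [hterm] using h.neg

lemma phi_eq_psi_add {m : ℝ} (hm : 0 < m) (x : ℝ) :
    phi m x = psi m + exp (-x) * ∑' l : ℕ, x ^ l / l ! * shiftedHarmonic m l := by
  have hm' : ∀ n : ℕ, m ≠ -n := fun n h => by linarith [n.cast_nonneg (α := ℝ)]
  simp_rw [phi, psi_nat_add hm', mul_add]
  rw [(((Real.hasSum_pow_div_factorial x).mul_right (psi m)).add
      (summable_norm_pow_div_factorial_mul_shiftedHarmonic hm x).of_norm.hasSum).tsum_eq,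
    mul_add, ← mul_assoc, ← exp_add, neg_add_cancel, exp_zero, one_mul]

theorem stmt4_general (m : ℝ) (hm : 0 < m) (x : ℝ) :
    (Summable fun k : ℕ =>
      |(-x) ^ (k + 1) / ((k + 1 : ℝ) * ∏ i ∈ Finset.range (k + 1), (m + i))|) ∧
    phi m x = psi m -
      ∑' k : ℕ, (-x) ^ (k + 1) / ((k + 1 : ℝ) * ∏ i ∈ Finset.range (k + 1), (m + i)) := by
  have hseries := hasSum_neg_pow_div_mul_prod hm x
  refine ⟨hseries.summable.abs, ?_⟩
  rw [phi_eq_psi_add hm, hseries.tsum_eq, sub_neg_eq_add]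

theorem stmt4 (m : ℝ) (hm : 0 < m) (x : ℝ) (hx : 0 ≤ x) :
    (Summable fun k : ℕ =>
      |(-x) ^ (k + 1) / ((k + 1 : ℝ) * ∏ i ∈ Finset.range (k + 1), (m + i))|) ∧
    phi m x = psi m -
      ∑' k : ℕ, (-x) ^ (k + 1) / ((k + 1 : ℝ) * ∏ i ∈ Finset.range (k + 1), (m + i)) :=
  stmt4_general m hm x
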